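/- arXiv:dg-ga/9511002 — 5 statements merged into one kernel-verified Lean document; each statement's English description precedes it below -/
import Mathlib

section
/- A quadratic map φ: ℝ^m → ℝ^n given by φ(X) = (XᵀA₁X, …, XᵀAₙX) with symmetric matrices Aᵢ is horizontally weakly conformal (i.e. ⟨∇φⁱ(X), ∇φʲ(X)⟩ = λ²(X)δⁱʲ for some function λ²) if and only if AᵢAⱼ + AⱼAᵢ = 0 for all i ≠ j and Aᵢ² = Aⱼ² for all i, j. -/
/-!
The gradient of `X ↦ Xᵀ A X` is `2 A X` for symmetric `A`, so the Gram matrix of the gradients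
of `φ` at `X` has entries `4 Xᵀ AᵢAⱼ X`. It is a scalar matrix at every `X` iff the quadratic
forms of `AᵢAⱼ` (`i ≠ j`) vanish and those of the `Aᵢ²` coincide. By polarization, a quadratic
form determines the symmetric part of its matrix; that of `AᵢAⱼ` is `(AᵢAⱼ + AⱼAᵢ) / 2`, and
`Aᵢ²` is symmetric already.
-/

open Matrix

namespace Matrix

section QuadraticForm

variable {R ι : Type*} [CommRing R] [Fintype ι]

theorem dotProduct_transpose_mulVec_self (M : Matrix ι ι R) (x : ι → R) :
    x ⬝ᵥ Mᵀ *ᵥ x = x ⬝ᵥ M *ᵥ x := by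
  rw [dotProduct_mulVec, vecMul_transpose, dotProduct_comm]

theorem IsSymm.mulVec_dotProduct_mulVec {A : Matrix ι ι R} (hA : A.IsSymm) (B : Matrix ι ι R)
    (x : ι → R) : A *ᵥ x ⬝ᵥ B *ᵥ x = x ⬝ᵥ (A * B) *ᵥ x := by
  rw [← mulVec_mulVec, dotProduct_mulVec x, ← hA.eq, vecMul_transpose, hA.eq]

theorem add_transpose_eq_zero_of_forall_dotProduct_mulVec_self [DecidableEq ι]
    {M : Matrix ι ι R} (h : ∀ x, x ⬝ᵥ M *ᵥ x = 0) : M + Mᵀ = 0 := by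
  ext a b
  have hab := h (Pi.single a 1 + Pi.single b 1)
  simp only [mulVec_add, dotProduct_add, add_dotProduct, mulVec_single_one,
    single_one_dotProduct, col_apply] at hab
  have haa := h (Pi.single a 1)
  have hbb := h (Pi.single b 1)
  simp only [mulVec_single_one, single_one_dotProduct, col_apply] at haa hbb
  simp only [add_apply, transpose_apply, zero_apply]
  linear_combination hab - haa - hbb

theorem add_transpose_eq_zero_iff_forall_dotProduct_mulVec_self [DecidableEq ι]
    [IsAddTorsionFree R] {M : Matrix ι ι R} : M + Mᵀ = 0 ↔ ∀ x, x ⬝ᵥ M *ᵥ x = 0 := by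
  refine ⟨fun h x => ?_, add_transpose_eq_zero_of_forall_dotProduct_mulVec_self⟩
  have hquad := congrArg (fun N => x ⬝ᵥ N *ᵥ x) h
  simp only [add_mulVec, dotProduct_add, dotProduct_transpose_mulVec_self, zero_mulVec,
    dotProduct_zero, ← two_nsmul] at hquad
  exact two_nsmul_eq_zero.mp hquad

theorem IsSymm.eq_iff_forall_dotProduct_mulVec_self [DecidableEq ι] [IsAddTorsionFree R]
    {M N : Matrix ι ι R} (hM : M.IsSymm) (hN : N.IsSymm) :
    M = N ↔ ∀ x, x ⬝ᵥ M *ᵥ x = x ⬝ᵥ N *ᵥ x := by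
  refine ⟨fun h x => h ▸ rfl, fun h => ?_⟩
  have hD : (M - N) + (M - N)ᵀ = 0 := add_transpose_eq_zero_of_forall_dotProduct_mulVec_self
    fun x => by rw [sub_mulVec, dotProduct_sub, h, sub_self]
  rw [(hM.sub hN).eq] at hD
  ext a b
  simpa only [add_apply, ← two_nsmul, zero_apply, two_nsmul_eq_zero, sub_apply, sub_eq_zero] using
    congr_fun₂ hD a b

end QuadraticForm

section Gradient

variable {𝕜 ι : Type*} [NontriviallyNormedField 𝕜] [CompleteSpace 𝕜] [Fintype ι]
  [DecidableEq ι]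

theorem fderiv_dotProduct_mulVec_self_apply (M : Matrix ι ι 𝕜) (x v : ι → 𝕜) :
    fderiv 𝕜 (fun z : ι → 𝕜 => z ⬝ᵥ M *ᵥ z) x v = x ⬝ᵥ M *ᵥ v + v ⬝ᵥ M *ᵥ x := by
  let B := (toBilin' M).toContinuousBilinearMap
  have hB : ∀ z w, B z w = z ⬝ᵥ M *ᵥ w := toBilin'_apply' M
  have hderiv := B.hasFDerivAt_of_bilinear (hasFDerivAt_id x) (hasFDerivAt_id x)
  simp only [id, hB] at hderiv
  simp [hderiv.fderiv, hB]

theorem IsSymm.fderiv_dotProduct_mulVec_self_apply {M : Matrix ι ι 𝕜} (hM : M.IsSymm)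
    (x v : ι → 𝕜) :
    fderiv 𝕜 (fun z : ι → 𝕜 => z ⬝ᵥ M *ᵥ z) x v = (2 • (M *ᵥ x)) ⬝ᵥ v := by
  rw [Matrix.fderiv_dotProduct_mulVec_self_apply, dotProduct_mulVec, ← hM.eq, vecMul_transpose,
    hM.eq, dotProduct_comm v, two_nsmul, add_dotProduct]

theorem IsSymm.sum_fderiv_dotProduct_mulVec_self_mul_fderiv {A B : Matrix ι ι 𝕜}
    (hA : A.IsSymm) (hB : B.IsSymm) (x : ι → 𝕜) :
    ∑ k, fderiv 𝕜 (fun z : ι → 𝕜 => z ⬝ᵥ A *ᵥ z) x (Pi.single k 1) *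
        fderiv 𝕜 (fun z : ι → 𝕜 => z ⬝ᵥ B *ᵥ z) x (Pi.single k 1)
      = 4 * (x ⬝ᵥ (A * B) *ᵥ x) := by
  simp only [hA.fderiv_dotProduct_mulVec_self_apply, hB.fderiv_dotProduct_mulVec_self_apply,
    dotProduct_single_one]
  rw [← dotProduct, smul_dotProduct, dotProduct_smul, hA.mulVec_dotProduct_mulVec]
  simp only [nsmul_eq_mul]
  ring

end Gradient

end Matrix

theorem exists_forall_eq_mul_ite_iff {α ι R : Type*} [MulZeroOneClass R] [DecidableEq ι]
    (g : α → ι → ι → R) :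
    (∃ c : α → R, ∀ x i j, g x i j = c x * if i = j then 1 else 0) ↔
      (∀ i j, i ≠ j → ∀ x, g x i j = 0) ∧ ∀ i j x, g x i i = g x j j := by
  constructor
  · rintro ⟨c, hc⟩
    exact ⟨fun i j hij x => by simp [hc, hij], fun i j x => by simp [hc]⟩
  · rintro ⟨hoff, hdiag⟩
    rcases isEmpty_or_nonempty ι with _ | ⟨⟨i₀⟩⟩
    · exact ⟨0, fun x i => isEmptyElim i⟩
    · refine ⟨fun x => g x i₀ i₀, fun x i j => ?_⟩
      by_cases hij : i = j
      · simp [hij, hdiag j i₀ x]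
      · simp [hij, hoff i j hij x]

/-- A quadratic map `φ(X) = (XᵀA₁X, …, XᵀAₙX)` with symmetric component matrices is
horizontally weakly conformal (`⟨∇φⁱ(X), ∇φʲ(X)⟩ = λ²(X) δⁱʲ`) iff the `Aᵢ` pairwise
anticommute and all the `Aᵢ²` are equal. -/
theorem quadratic_map_horizConformal_iff (m n : ℕ)
    (A : Fin n → Matrix (Fin m) (Fin m) ℝ) (hA : ∀ i, (A i).IsSymm) :
    (∃ lam : (Fin m → ℝ) → ℝ, ∀ (X : Fin m → ℝ) (i j : Fin n),
      ∑ k : Fin m,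
          fderiv ℝ (fun (Z : Fin m → ℝ) => Z ⬝ᵥ (A i).mulVec Z) X (Pi.single k 1) *
          fderiv ℝ (fun (Z : Fin m → ℝ) => Z ⬝ᵥ (A j).mulVec Z) X (Pi.single k 1)
        = lam X * (if i = j then 1 else 0))
    ↔ ((∀ i j, i ≠ j → A i * A j + A j * A i = 0) ∧ (∀ i j, (A i) ^ 2 = (A j) ^ 2)) := by
  have hgram := fun X i j => (hA i).sum_fderiv_dotProduct_mulVec_self_mul_fderiv (hA j) X
  simp only [hgram]
  rw [exists_forall_eq_mul_ite_iff]
  refine and_congr (forall₂_congr fun i j => forall_congr' fun _ => ?_)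
    (forall₂_congr fun i j => ?_)
  · have htranspose : (A i * A j)ᵀ = A j * A i := by rw [transpose_mul, (hA i).eq, (hA j).eq]
    rw [← htranspose, add_transpose_eq_zero_iff_forall_dotProduct_mulVec_self]
    simp
  · rw [((hA i).pow 2).eq_iff_forall_dotProduct_mulVec_self ((hA j).pow 2), sq, sq]
    simp
end

section
/- Let A and B be symmetric m×m real matrices with AB + BA = 0 and A² = B², with A, B not zero. Then the rank of A is even. -/
open Matrix

/-- For a symmetric real matrix `S`, the kernel and range of `mulVecLin S`
intersect trivially. -/
lemma ker_inf_range_symm {m : ℕ} (S : Matrix (Fin m) (Fin m) ℝ) (hS : S.IsSymm) :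
    ∀ v, S.mulVec v = 0 → v ∈ LinearMap.range S.mulVecLin → v = 0 := by
  intro v hv ⟨x, hx⟩
  simp only [mulVecLin_apply] at hx
  have h : v ⬝ᵥ v = 0 := by
    nth_rewrite 2 [← hx]
    rw [dotProduct_mulVec, ← mulVec_transpose, hS.eq, hv, zero_dotProduct]
  exact (dotProduct_self_eq_zero).mp h

/-- If `A, B` are nonzero symmetric real matrices with `AB + BA = 0` and `A² = B²`,
then the rank of `A` is even. -/
theorem rank_even_of_anticommute (m : ℕ) (A B : Matrix (Fin m) (Fin m) ℝ)
    (hA : A.IsSymm) (hB : B.IsSymm) (hA0 : A ≠ 0) (hB0 : B ≠ 0)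
    (hanti : A * B + B * A = 0) (hsq : A ^ 2 = B ^ 2) :
    Even A.rank := by
  classical
  -- the key subspace : range of A²
  set V : Submodule ℝ (Fin m → ℝ) := LinearMap.range (A ^ 2).mulVecLin with hV
  have hA2symm : (A ^ 2).IsSymm := by
    rw [Matrix.IsSymm, sq, transpose_mul, hA.eq]
  have h1 : A * B = -(B * A) := eq_neg_of_add_eq_zero_left hanti
  have h2 : B * A = -(A * B) := eq_neg_of_add_eq_zero_right hanti
  -- B commutes with A²
  have hcomm : B * A ^ 2 = A ^ 2 * B := by
    have h3 : B * A * A = A * (A * B) := by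
      rw [h2, neg_mul, mul_assoc, h1, mul_neg]
    simpa [sq, mul_assoc] using h3
  -- A and B map V into V
  have hAV : ∀ x ∈ V, A.mulVecLin x ∈ V := by
    rintro x ⟨y, rfl⟩
    exact ⟨A.mulVec y, by simp only [mulVecLin_apply, mulVec_mulVec, sq,
      Matrix.mul_assoc]⟩
  have hBV : ∀ x ∈ V, B.mulVecLin x ∈ V := by
    rintro x ⟨y, rfl⟩
    exact ⟨B.mulVec y, by simp only [mulVecLin_apply, mulVec_mulVec, hcomm]⟩
  -- the restrictions
  set f : V →ₗ[ℝ] V := A.mulVecLin.restrict hAV with hf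
  set g : V →ₗ[ℝ] V := B.mulVecLin.restrict hBV with hg
  -- f is injective: ker A ∩ range A² = 0 (range A² ⊆ range A)
  have hfinj : LinearMap.ker f = ⊥ := by
    rw [LinearMap.ker_eq_bot']
    rintro ⟨v, hv⟩ hfv
    have hv0 : A.mulVec v = 0 := by
      have := congrArg Subtype.val hfv
      simpa [hf, LinearMap.restrict_apply] using this
    have hvr : v ∈ LinearMap.range A.mulVecLin := by
      obtain ⟨y, hy⟩ := hv
      exact ⟨A.mulVec y, by simpa [mulVec_mulVec, sq] using hy⟩
    exact Subtype.ext (ker_inf_range_symm A hA v hv0 hvr)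
  -- g is injective: g² = restriction of B² = A², injective on V
  have hginj : LinearMap.ker g = ⊥ := by
    rw [LinearMap.ker_eq_bot']
    rintro ⟨v, hv⟩ hgv
    have hv0 : B.mulVec v = 0 := by
      have := congrArg Subtype.val hgv
      simpa [hg, LinearMap.restrict_apply] using this
    have hv2 : (A ^ 2).mulVec v = 0 := by
      rw [hsq, sq, ← mulVec_mulVec, hv0, mulVec_zero]
    exact Subtype.ext (ker_inf_range_symm (A ^ 2) hA2symm v hv2 hv)
  -- anticommutation of the restrictions
  have hfg : f ∘ₗ g = -(g ∘ₗ f) := by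
    apply LinearMap.ext
    rintro ⟨v, hv⟩
    apply Subtype.ext
    have h3 : A.mulVec (B.mulVec v) = -(B.mulVec (A.mulVec v)) := by
      rw [mulVec_mulVec, mulVec_mulVec, h1, neg_mulVec]
    simpa [hf, hg, LinearMap.restrict_apply] using h3
  -- determinant argument
  have hdet : LinearMap.det f * LinearMap.det g
      = (-1 : ℝ) ^ (Module.finrank ℝ V) * (LinearMap.det g * LinearMap.det f) := by
    have hc : LinearMap.det (f ∘ₗ g) = LinearMap.det f * LinearMap.det g :=
      LinearMap.det_comp f g
    have hn : LinearMap.det (-(g ∘ₗ f))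
        = (-1 : ℝ) ^ (Module.finrank ℝ V) * LinearMap.det (g ∘ₗ f) := by
      rw [← neg_one_smul ℝ (g ∘ₗ f), LinearMap.det_smul]
    rw [← hc, hfg, hn, LinearMap.det_comp]
  have hdf : LinearMap.det f ≠ 0 := by
    intro h
    exact absurd hfinj (ne_of_gt (LinearMap.bot_lt_ker_of_det_eq_zero h))
  have hdg : LinearMap.det g ≠ 0 := by
    intro h
    exact absurd hginj (ne_of_gt (LinearMap.bot_lt_ker_of_det_eq_zero h))
  have hpow : (-1 : ℝ) ^ (Module.finrank ℝ V) = 1 := by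
    have hne : LinearMap.det g * LinearMap.det f ≠ 0 := mul_ne_zero hdg hdf
    have : (-1 : ℝ) ^ (Module.finrank ℝ V) * (LinearMap.det g * LinearMap.det f)
        = 1 * (LinearMap.det g * LinearMap.det f) := by
      rw [one_mul, ← hdet, mul_comm]
    exact mul_right_cancel₀ hne this
  have heven : Even (Module.finrank ℝ V) :=
    (neg_one_pow_eq_one_iff_even (by norm_num : (-1 : ℝ) ≠ 1)).mp hpow
  have hrank : Module.finrank ℝ V = A.rank := by
    rw [← Matrix.rank_transpose_mul_self A, hA.eq, ← sq]
    rfl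
  rwa [hrank] at heven
end

section
/- Let A and B be symmetric m×m real matrices with AB + BA = 0 and A² = B². If λ > 0 is an eigenvalue of A, then −λ is also an eigenvalue of A, and the eigenspaces of A for λ and −λ have the same dimension. -/
open Matrix

/-- If `A, B` are symmetric with `AB + BA = 0` and `A² = B²`, and `λ > 0` is an
eigenvalue of `A`, then `−λ` is also an eigenvalue of `A` and the eigenspaces of
`A` for `λ` and `−λ` have the same dimension. -/
theorem eigenvalue_pair_of_anticommute (m : ℕ) (A B : Matrix (Fin m) (Fin m) ℝ)
    (hA : A.IsSymm) (hB : B.IsSymm)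
    (hanti : A * B + B * A = 0) (hsq : A ^ 2 = B ^ 2)
    (lam : ℝ) (hpos : 0 < lam)
    (heig : Module.End.HasEigenvalue (Matrix.toLin' A) lam) :
    Module.End.HasEigenvalue (Matrix.toLin' A) (-lam) ∧
      Module.finrank ℝ (Module.End.eigenspace (Matrix.toLin' A) lam) =
        Module.finrank ℝ (Module.End.eigenspace (Matrix.toLin' A) (-lam)) := by
  set f := Matrix.toLin' A with hf
  set g := Matrix.toLin' B with hg
  have hfg : ∀ x, f (g x) = - g (f x) := by
    intro x
    have h := congrArg (fun M => Matrix.toLin' M x) hanti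
    simp only [map_add, Matrix.toLin'_mul, map_zero, LinearMap.add_apply,
      LinearMap.comp_apply, LinearMap.zero_apply] at h
    exact eq_neg_of_add_eq_zero_left h
  have hsq' : ∀ x, f (f x) = g (g x) := by
    intro x
    have h := congrArg (fun M => Matrix.toLin' M x) hsq
    simpa only [pow_two, Matrix.toLin'_mul, LinearMap.comp_apply] using h
  -- g maps eigenspace μ into eigenspace (-μ)
  have key : ∀ (μ : ℝ), ∀ x ∈ Module.End.eigenspace f μ,
      g x ∈ Module.End.eigenspace f (-μ) := by
    intro μ x hx
    rw [Module.End.mem_eigenspace_iff] at hx ⊢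
    rw [hfg x, hx, _root_.map_smul, neg_smul]
  -- injectivity of g on eigenspace μ for μ ≠ 0
  have inj : ∀ (μ : ℝ), μ ≠ 0 → ∀ x ∈ Module.End.eigenspace f μ, g x = 0 → x = 0 := by
    intro μ hμ x hx hgx
    rw [Module.End.mem_eigenspace_iff] at hx
    have h1 : g (g x) = 0 := by rw [hgx, map_zero]
    have h2 : f (f x) = (μ * μ) • x := by rw [hx, _root_.map_smul, hx, smul_smul]
    rw [hsq', h1] at h2
    have := (smul_eq_zero.mp h2.symm).resolve_left (mul_ne_zero hμ hμ)
    exact this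
  have hlam : lam ≠ 0 := ne_of_gt hpos
  -- -lam eigenvalue
  obtain ⟨v, hv⟩ := heig.exists_hasEigenvector
  have hv1 : v ∈ Module.End.eigenspace f lam := hv.1
  have hgv : g v ∈ Module.End.eigenspace f (-lam) := key lam v hv1
  have hgvne : g v ≠ 0 := fun h => hv.2 (inj lam hlam v hv1 h)
  have heig' : Module.End.HasEigenvalue f (-lam) :=
    Module.End.hasEigenvalue_of_hasEigenvector ⟨hgv, hgvne⟩
  refine ⟨heig', ?_⟩
  -- dimension equality via restricted maps
  have hmap1 : ∀ x ∈ Module.End.eigenspace f lam, g x ∈ Module.End.eigenspace f (-lam) :=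
    key lam
  have hmap2 : ∀ x ∈ Module.End.eigenspace f (-lam), g x ∈ Module.End.eigenspace f lam := by
    intro x hx
    simpa using key (-lam) x hx
  let G1 := g.restrict hmap1
  let G2 := g.restrict hmap2
  have hG1 : Function.Injective G1 := by
    intro x y hxy
    have : g (x - y : (Fin m → ℝ)) = 0 := by
      have := congrArg (Subtype.val) hxy
      simp only [LinearMap.restrict_apply, G1] at this
      rw [map_sub, this, sub_self]
    have := inj lam hlam (x - y) (sub_mem x.2 y.2) this
    exact Subtype.ext (by rw [← sub_eq_zero]; exact this)
  have hG2 : Function.Injective G2 := by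
    intro x y hxy
    have : g (x - y : (Fin m → ℝ)) = 0 := by
      have := congrArg (Subtype.val) hxy
      simp only [LinearMap.restrict_apply, G2] at this
      rw [map_sub, this, sub_self]
    have := inj (-lam) (neg_ne_zero.mpr hlam) (x - y) (sub_mem x.2 y.2) this
    exact Subtype.ext (by rw [← sub_eq_zero]; exact this)
  exact le_antisymm (LinearMap.finrank_le_finrank_of_injective hG1)
    (LinearMap.finrank_le_finrank_of_injective hG2)
end

section
/- Let A₁, …, Aₙ be symmetric m×m real matrices satisfying AᵢAⱼ + AⱼAᵢ = 0 for i ≠ j and Aᵢ² = Aⱼ² for all i, j. Then all the Aᵢ have the same spectrum (the same set of eigenvalues, counted with multiplicity). -/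
open Matrix Polynomial

/-- If `T * B = A * T` with `T` invertible, then `A` and `B` have the same charpoly. -/
private lemma charpoly_eq_of_intertwine {m : ℕ} (A B T : Matrix (Fin m) (Fin m) ℝ)
    (hdet : T.det ≠ 0) (h : T * B = A * T) : A.charpoly = B.charpoly := by
  have key : A.charmatrix * T.map C = T.map C * B.charmatrix := by
    unfold charmatrix
    rw [sub_mul, mul_sub]
    congr 1
    · exact ((Matrix.scalar_commute (X : ℝ[X]) (fun r => Commute.all _ _) (T.map C)).eq)
    · rw [RingHom.mapMatrix_apply, RingHom.mapMatrix_apply, ← Matrix.map_mul, ← Matrix.map_mul, h]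
  have hdet2 := congrArg det key
  have hmap : (T.map (C : ℝ →+* ℝ[X])).det = C T.det := by
    rw [← RingHom.mapMatrix_apply, ← RingHom.map_det]
  rw [det_mul, det_mul, hmap] at hdet2
  have hC : (C T.det : ℝ[X]) ≠ 0 := by simpa using hdet
  unfold Matrix.charpoly
  -- hdet2 : A.charmatrix.det * C T.det = C T.det * B.charmatrix.det
  rw [mul_comm (C T.det)] at hdet2
  exact mul_right_cancel₀ hC hdet2

private lemma key_pair {m : ℕ} {A B : Matrix (Fin m) (Fin m) ℝ}
    (hAs : A.IsSymm) (hBs : B.IsSymm)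
    (hanti : A * B + B * A = 0) (hsq : A ^ 2 = B ^ 2) :
    A.charpoly = B.charpoly := by
  have hA : A.IsHermitian := by
    rwa [Matrix.IsHermitian, conjTranspose_eq_transpose_of_trivial]
  set U : Matrix (Fin m) (Fin m) ℝ := (hA.eigenvectorUnitary : Matrix (Fin m) (Fin m) ℝ) with hU
  set d : Fin m → ℝ := hA.eigenvalues with hd
  have hspec : A = U * diagonal d * star U := by
    have := hA.spectral_theorem
    rwa [RCLike.ofReal_real_eq_id, Function.id_comp] at this
  have hUU : U * star U = 1 := (Matrix.mem_unitaryGroup_iff).mp hA.eigenvectorUnitary.2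
  have hUU' : star U * U = 1 := (Matrix.mem_unitaryGroup_iff').mp hA.eigenvectorUnitary.2
  set δ : Fin m → ℝ := fun i => if d i = 0 then 1 else 0 with hδ
  set P : Matrix (Fin m) (Fin m) ℝ := U * diagonal δ * star U with hP
  -- conjugated products
  have conj_mul : ∀ e f : Fin m → ℝ,
      (U * diagonal e * star U) * (U * diagonal f * star U)
        = U * diagonal (fun i => e i * f i) * star U := by
    intro e f
    calc (U * diagonal e * star U) * (U * diagonal f * star U)
        = U * diagonal e * (star U * U) * diagonal f * star U := by
          simp only [Matrix.mul_assoc]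
      _ = U * (diagonal e * diagonal f) * star U := by
          rw [hUU', Matrix.mul_one]; simp only [Matrix.mul_assoc]
      _ = U * diagonal (fun i => e i * f i) * star U := by
          rw [diagonal_mul_diagonal]
  have hAP : A * P = 0 := by
    rw [hspec, hP, conj_mul]
    have : (fun i => d i * δ i) = fun _ => (0 : ℝ) := by
      funext i; by_cases h : d i = 0 <;> simp [hδ, h]
    rw [this, diagonal_zero, Matrix.mul_zero, Matrix.zero_mul]
  have hPA : P * A = 0 := by
    rw [hspec, hP, conj_mul]
    have : (fun i => δ i * d i) = fun _ => (0 : ℝ) := by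
      funext i; by_cases h : d i = 0 <;> simp [hδ, h]
    rw [this, diagonal_zero, Matrix.mul_zero, Matrix.zero_mul]
  have hPP : P * P = P := by
    have hδδ : (fun i => δ i * δ i) = δ := by
      funext i; by_cases h : d i = 0 <;> simp [hδ, h]
    rw [hP, conj_mul, hδδ, Matrix.mul_assoc]
  -- B kills the kernel eigenvectors
  have hBu : ∀ k : Fin m, d k = 0 → B *ᵥ (fun i => U i k) = 0 := by
    intro k hk
    have hu : (fun i => U i k) = ⇑(hA.eigenvectorBasis k) := by
      funext i; exact hA.eigenvectorUnitary_apply i k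
    have hAu : A *ᵥ (fun i => U i k) = 0 := by
      rw [hu, hA.mulVec_eigenvectorBasis]
      have : hA.eigenvalues k = 0 := hk
      rw [this, zero_smul]
    have hB2u : (B * B) *ᵥ (fun i => U i k) = 0 := by
      have : (A * A) *ᵥ (fun i => U i k) = 0 := by
        rw [← mulVec_mulVec, hAu, mulVec_zero]
      rwa [← pow_two, hsq, pow_two] at this
    set u : Fin m → ℝ := fun i => U i k with hu'
    set w : Fin m → ℝ := B *ᵥ u with hw
    have hBw : B *ᵥ w = 0 := by rw [hw, mulVec_mulVec, hB2u]
    have hww : w ⬝ᵥ w = 0 := by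
      have h1 : u ⬝ᵥ (B *ᵥ w) = 0 := by rw [hBw, dotProduct_zero]
      rw [dotProduct_mulVec] at h1
      have h2 : u ᵥ* B = B *ᵥ u := by
        rw [← Matrix.mulVec_transpose, hBs.eq]
      rwa [h2, ← hw] at h1
    exact dotProduct_self_eq_zero.mp hww
  have hBP : B * P = 0 := by
    have hBUδ : B * (U * diagonal δ) = 0 := by
      ext i k
      rw [← Matrix.mul_assoc, Matrix.mul_diagonal]
      by_cases h : d k = 0
      · have := congrFun (hBu k h) i
        have hbu : (B * U) i k = (B *ᵥ (fun i => U i k)) i := by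
          simp [Matrix.mul_apply, Matrix.mulVec, dotProduct]
        rw [hbu, this]
        simp
      · simp [hδ, h]
    calc B * P = B * (U * diagonal δ) * star U := by
          rw [hP]; simp only [Matrix.mul_assoc]
      _ = 0 := by rw [hBUδ, Matrix.zero_mul]
  have hPsymm : Pᵀ = P := by
    have hstar : star U = Uᵀ := by
      rw [Matrix.star_eq_conjTranspose, conjTranspose_eq_transpose_of_trivial]
    rw [hP, hstar, Matrix.transpose_mul, Matrix.transpose_mul, transpose_transpose,
      diagonal_transpose, Matrix.mul_assoc]
  have hPB : P * B = 0 := by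
    have : (B * P)ᵀ = 0 := by rw [hBP, transpose_zero]
    rw [Matrix.transpose_mul, hPsymm, hBs.eq] at this
    exact this
  -- the intertwiner
  set T : Matrix (Fin m) (Fin m) ℝ := A + B + P with hT
  have hTB : T * B = A * T := by
    rw [hT, add_mul, add_mul, mul_add, mul_add, hPB, hAP, ← pow_two, ← pow_two, hsq]
    abel
  have hTT : T * T = U * diagonal (fun i => d i * d i + d i * d i + δ i) * star U := by
    have hA2 : A * A = U * diagonal (fun i => d i * d i) * star U := by
      rw [hspec, conj_mul]
    have hB2 : B * B = U * diagonal (fun i => d i * d i) * star U := by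
      rw [← pow_two, ← hsq, pow_two, hA2]
    have hBA : B * A = -(A * B) := by
      linear_combination (norm := noncomm_ring) hanti
    have expand : T * T = A * A + B * B + P := by
      rw [hT]
      have : (A + B + P) * (A + B + P)
          = A * A + A * B + A * P + (B * A + B * B + B * P) + (P * A + P * B + P * P) := by
        noncomm_ring
      rw [this, hAP, hPA, hBP, hPB, hPP, hBA]
      abel
    rw [expand, hA2, hB2]
    have hPd : P = U * diagonal δ * star U := hP
    rw [hPd]
    have : diagonal (fun i => d i * d i + d i * d i + δ i)
        = diagonal (fun i => d i * d i) + diagonal (fun i => d i * d i) + diagonal δ := by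
      rw [← diagonal_add, ← diagonal_add]
    rw [this, Matrix.mul_add, Matrix.mul_add, Matrix.add_mul, Matrix.add_mul]
  have hprod : (∏ i, (d i * d i + d i * d i + δ i)) ≠ 0 := by
    apply Finset.prod_ne_zero_iff.mpr
    intro i _
    by_cases h : d i = 0
    · simp [hδ, h]
    · intro hc
      have hpos : 0 < d i * d i := mul_self_pos.mpr h
      simp only [hδ, if_neg h, add_zero] at hc
      nlinarith
  have hdetT : T.det ≠ 0 := by
    have h1 := congrArg det hTT
    rw [det_mul, det_mul, det_mul, det_diagonal] at h1
    have hUdet : U.det * (star U).det = 1 := by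
      rw [← det_mul, hUU, det_one]
    have h2 : T.det * T.det = ∏ i, (d i * d i + d i * d i + δ i) := by
      calc T.det * T.det = U.det * (∏ i, (d i * d i + d i * d i + δ i)) * (star U).det := h1
        _ = (∏ i, (d i * d i + d i * d i + δ i)) * (U.det * (star U).det) := by ring
        _ = ∏ i, (d i * d i + d i * d i + δ i) := by rw [hUdet, mul_one]
    intro h0
    rw [h0, mul_zero] at h2
    exact hprod h2.symm
  exact charpoly_eq_of_intertwine A B T hdetT hTB

/-- Symmetric matrices that pairwise anticommute and have equal squares all have the
same spectrum counted with multiplicity, i.e. the same characteristic polynomial. -/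
theorem charpoly_eq_of_anticommute_sq_eq (m n : ℕ)
    (A : Fin n → Matrix (Fin m) (Fin m) ℝ) (hA : ∀ i, (A i).IsSymm)
    (hanti : ∀ i j, i ≠ j → A i * A j + A j * A i = 0)
    (hsq : ∀ i j, (A i) ^ 2 = (A j) ^ 2) :
    ∀ i j, (A i).charpoly = (A j).charpoly := by
  intro i j
  rcases eq_or_ne i j with rfl | h
  · rfl
  · exact key_pair (hA i) (hA j) (hanti i j h) (hsq i j)
end

section
/- Let D be a k×k diagonal matrix with positive diagonal entries and B₁ a real k×k matrix such that DB₁ = B₁D and B₁ᵀB₁ = D². Then the quadratic map φ: ℝ^{2k} → ℝ² given by φ(X) = (Xᵀ[[D,0],[0,−D]]X, Xᵀ[[0,B₁],[B₁ᵀ,0]]X) is a harmonic morphism (harmonic and horizontally weakly conformal). -/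
open Matrix

/-- If `D` is a `k×k` diagonal matrix with positive entries and `B₁` satisfies
`DB₁ = B₁D` and `B₁ᵀB₁ = D²`, then the quadratic map
`X ↦ (Xᵀ[[D,0],[0,−D]]X, Xᵀ[[0,B₁],[B₁ᵀ,0]]X)` is a harmonic morphism, i.e. its
component matrices are trace-free, anticommute, and have equal squares. -/
theorem normal_form_is_harmonic_morphism (k : ℕ) (d : Fin k → ℝ)
    (hd : ∀ i, 0 < d i) (B₁ : Matrix (Fin k) (Fin k) ℝ)
    (D : Matrix (Fin k) (Fin k) ℝ) (hD : D = Matrix.diagonal d)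
    (hcomm : D * B₁ = B₁ * D) (horth : B₁ᵀ * B₁ = D ^ 2) :
    (Matrix.fromBlocks D 0 0 (-D)).trace = 0 ∧
    (Matrix.fromBlocks 0 B₁ B₁ᵀ (0 : Matrix (Fin k) (Fin k) ℝ)).trace = 0 ∧
    (Matrix.fromBlocks D 0 0 (-D)) * (Matrix.fromBlocks 0 B₁ B₁ᵀ 0) +
      (Matrix.fromBlocks 0 B₁ B₁ᵀ 0) * (Matrix.fromBlocks D 0 0 (-D)) = 0 ∧
    (Matrix.fromBlocks D 0 0 (-D)) ^ 2 =
      (Matrix.fromBlocks 0 B₁ B₁ᵀ (0 : Matrix (Fin k) (Fin k) ℝ)) ^ 2 := by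
  have hDT : Dᵀ = D := by rw [hD]; exact Matrix.diagonal_transpose d
  have hcommT : D * B₁ᵀ = B₁ᵀ * D := by
    have := congrArg Matrix.transpose hcomm
    simpa [Matrix.transpose_mul, hDT] using this.symm
  -- B₁ is invertible
  have hdetD : IsUnit D.det := by
    rw [hD, Matrix.det_diagonal]
    exact (Finset.prod_pos (fun i _ => hd i)).ne'.isUnit
  have hdetB : IsUnit B₁.det := by
    have h2 : IsUnit (D ^ 2).det := by
      rw [Matrix.det_pow]; exact hdetD.pow 2
    rw [← horth, Matrix.det_mul, Matrix.det_transpose] at h2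
    exact (isUnit_of_mul_isUnit_left (by rwa [mul_comm] at h2))
  have hBinv : B₁ * B₁⁻¹ = 1 := Matrix.mul_nonsing_inv _ hdetB
  have hcomm2 : D ^ 2 * B₁ = B₁ * D ^ 2 := by
    rw [sq, mul_assoc, hcomm, ← mul_assoc, hcomm, mul_assoc]
  have hBBT : B₁ * B₁ᵀ = D ^ 2 := by
    calc B₁ * B₁ᵀ = B₁ * B₁ᵀ * (B₁ * B₁⁻¹) := by rw [hBinv, mul_one]
      _ = B₁ * (B₁ᵀ * B₁) * B₁⁻¹ := by rw [← mul_assoc, mul_assoc B₁ B₁ᵀ B₁]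
      _ = D ^ 2 * B₁ * B₁⁻¹ := by rw [horth, hcomm2]
      _ = D ^ 2 := by rw [mul_assoc, hBinv, mul_one]
  refine ⟨?_, ?_, ?_, ?_⟩
  · simp [Matrix.trace, Matrix.diag, Matrix.fromBlocks, Fintype.sum_sum_type]
  · simp [Matrix.trace, Matrix.diag, Matrix.fromBlocks, Fintype.sum_sum_type]
  · rw [Matrix.fromBlocks_multiply, Matrix.fromBlocks_multiply]
    simp only [Matrix.mul_zero, Matrix.zero_mul, add_zero, zero_add,
      Matrix.neg_mul, Matrix.mul_neg, neg_zero]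
    rw [Matrix.fromBlocks_add]
    simp [hcomm, hcommT, ← Matrix.fromBlocks_zero]
  · rw [sq, sq, Matrix.fromBlocks_multiply, Matrix.fromBlocks_multiply]
    simp [hBBT, horth, Matrix.mul_neg, Matrix.neg_mul, ← sq]
end
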